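/- arXiv:2103.03085 — 2 statements merged into one kernel-verified Lean document; each statement's English description precedes it below -/
import Mathlib

section
/- Let W be any finite nonempty auxiliary index type and let ψ be a unit vector in ℂ^{W×X×Y×D̄×P}. Let ψ' := Ō·M̄·ψ and ψ'' := M̄·Ō·ψ, where Ō := 1_W ⊗ O_{XYD} ⊗ 1_P and M̄ := 1_{W×X×Y} ⊗ M_{DP}. Then the trace distance between the pure states |ψ'⟩⟨ψ'| and |ψ''⟩⟨ψ''| is at most 8·2^{−n/2}·√(2·Γ_R); that is, one half of the sum of the absolute values of the eigenvalues of the Hermitian matrix ψ'ψ'† − ψ''ψ''† is at most 8·2^{−n/2}·√(2·Γ_R). -/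
open scoped Matrix Kronecker

noncomputable section

/-- The ℓ²→ℓ² operator norm of a square complex matrix. -/
def opNorm {I : Type*} [Fintype I] [DecidableEq I] (A : Matrix I I ℂ) : ℝ :=
  ‖Matrix.toEuclideanCLM (𝕜 := ℂ) A‖

/-- The commutator [A,B] = AB - BA. -/
def commM {I : Type*} [Fintype I] (A B : Matrix I I ℂ) : Matrix I I ℂ := A * B - B * A

/-- Euclidean norm of a vector in ℂ^I. -/
def vnorm {I : Type*} [Fintype I] (v : I → ℂ) : ℝ := Real.sqrt (∑ i, ‖v i‖ ^ 2)

/-- Y = {0,1}^n. -/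
abbrev Yb (n : ℕ) := Fin n → Bool
/-- Ȳ = Y ∪ {⊥}. -/
abbrev Ybar (n : ℕ) := Option (Yb n)

/-- standard basis vector |a⟩. -/
def ket {n : ℕ} (a : Ybar n) : Ybar n → ℂ := fun b => if b = a then 1 else 0

/-- (-1)^{η⋅y}. -/
def signDot {n : ℕ} (η y : Yb n) : ℂ := (-1 : ℂ) ^ (Finset.univ.filter fun i => η i && y i).card

/-- 2^{-n/2}. -/
def cst (n : ℕ) : ℝ := (2 : ℝ) ^ (-(n : ℝ) / 2)

/-- |φ_η⟩ = 2^{-n/2} ∑_y (-1)^{η⋅y} |y⟩. -/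
def phi {n : ℕ} (η : Yb n) : Ybar n → ℂ :=
  fun a => Option.casesOn a 0 fun y => (cst n : ℂ) * signDot η y

/-- |φ_0⟩. -/
def phi0 (n : ℕ) : Ybar n → ℂ := phi fun _ => false

/-- The Walsh–Hadamard transform on ℂ^Y, extended by the identity on |⊥⟩. -/
def Hbar (n : ℕ) : Matrix (Ybar n) (Ybar n) ℂ :=
  Matrix.of fun a b =>
    match a, b with
    | none, none => 1
    | some y, some y' => (cst n : ℂ) * signDot y y'
    | _, _ => 0

/-- The involution exchanging ⊥ and 0^n. -/
def swapBot (n : ℕ) : Ybar n → Ybar n :=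
  fun a =>
    Option.casesOn a (some fun _ => false) fun y =>
      if y = (fun _ => false) then none else some y

/-- The permutation matrix exchanging |⊥⟩ and |0^n⟩. -/
def Sswap (n : ℕ) : Matrix (Ybar n) (Ybar n) ℂ :=
  Matrix.of fun a b => if a = swapBot n b then 1 else 0

/-- F = H̄ ⬝ S ⬝ H̄. -/
def Fmat (n : ℕ) : Matrix (Ybar n) (Ybar n) ℂ := Hbar n * Sswap n * Hbar n

/-- Γ_x = |{y : (x,y) ∈ R}|. -/
def Gam {n : ℕ} {X : Type*} [Fintype X] (R : X → Yb n → Prop) [∀ x, DecidablePred (R x)]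
    (x : X) : ℕ :=
  (Finset.univ.filter fun y => R x y).card

/-- Γ_R = max_x Γ_x. -/
def GamR {n : ℕ} {X : Type*} [Fintype X] (R : X → Yb n → Prop) [∀ x, DecidablePred (R x)] : ℕ :=
  Finset.univ.sup fun x => Gam R x

/-- whether an entry a ∈ Ȳ satisfies the relation at x (⊥ never does). -/
def hitB {n : ℕ} {X : Type*} (R : X → Yb n → Prop) [∀ x, DecidablePred (R x)] (x : X) :
    Ybar n → Bool :=
  fun a => Option.casesOn a false fun y => decide (R x y)

/-- The projection Π^x = ∑_{y : (x,y)∈R} |y⟩⟨y| on ℂ^Ȳ. -/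
def Pix {n : ℕ} {X : Type*} (R : X → Yb n → Prop) [∀ x, DecidablePred (R x)] (x : X) :
    Matrix (Ybar n) (Ybar n) ℂ :=
  Matrix.diagonal fun a => if hitB R x a then 1 else 0

/-- bitwise xor. -/
def xorY {n : ℕ} (y y' : Yb n) : Yb n := fun i => xor (y i) (y' i)

/-- CNOT on Y × Ȳ (control Ȳ, target Y), acting trivially on |y⟩⊗|⊥⟩. -/
def cnotFun (n : ℕ) : Yb n × Ybar n → Yb n × Ybar n :=
  fun p => Option.casesOn p.2 p fun y' => (xorY p.1 y', p.2)

def CNOTmat (n : ℕ) : Matrix (Yb n × Ybar n) (Yb n × Ybar n) ℂ :=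
  Matrix.of fun a b => if a = cnotFun n b then 1 else 0

/-- O^x = (1⊗F)·CNOT·(1⊗F) on ℂ^{Y×Ȳ}. -/
def Oxsmall (n : ℕ) : Matrix (Yb n × Ybar n) (Yb n × Ybar n) ℂ :=
  ((1 : Matrix (Yb n) (Yb n) ℂ) ⊗ₖ Fmat n) * CNOTmat n *
    ((1 : Matrix (Yb n) (Yb n) ℂ) ⊗ₖ Fmat n)

/-- The database index set D̄ = X → Ȳ. -/
abbrev Db (n : ℕ) (X : Type*) := X → Ybar n

/-- An operator A on ℂ^Ȳ acting on the x-coordinate of ℂ^{D̄}. -/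
def onCoord {n : ℕ} {X : Type*} [Fintype X] [DecidableEq X] (x : X)
    (A : Matrix (Ybar n) (Ybar n) ℂ) : Matrix (Db n X) (Db n X) ℂ :=
  Matrix.of fun d d' => if ∀ x', x' ≠ x → d x' = d' x' then A (d x) (d' x) else 0

/-- Π^x_{D_x} : diagonal projection on ℂ^{D̄} onto databases with (x, d x) ∈ R. -/
def PiDx {n : ℕ} {X : Type*} [Fintype X] [DecidableEq X]
    (R : X → Yb n → Prop) [∀ x, DecidablePred (R x)] (x : X) :
    Matrix (Db n X) (Db n X) ℂ :=
  Matrix.diagonal fun d => if hitB R x (d x) then 1 else 0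

/-- Π^∅_D : diagonal projection on ℂ^{D̄} onto databases hitting R nowhere. -/
def PiEmptyD {n : ℕ} {X : Type*} [Fintype X] [DecidableEq X]
    (R : X → Yb n → Prop) [∀ x, DecidablePred (R x)] :
    Matrix (Db n X) (Db n X) ℂ :=
  Matrix.diagonal fun d => if ∀ x, hitB R x (d x) = false then 1 else 0

/-- CNOT_{YD_x}. -/
def cnotDFun {n : ℕ} {X : Type*} (x : X) : Yb n × Db n X → Yb n × Db n X :=
  fun p => Option.casesOn (p.2 x) p fun yx => (xorY p.1 yx, p.2)

def CNOTD {n : ℕ} {X : Type*} [Fintype X] [DecidableEq X] (x : X) :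
    Matrix (Yb n × Db n X) (Yb n × Db n X) ℂ :=
  Matrix.of fun a b => if a = cnotDFun x b then 1 else 0

/-- F_{D_x}. -/
def FDx (n : ℕ) {X : Type*} [Fintype X] [DecidableEq X] (x : X) :
    Matrix (Db n X) (Db n X) ℂ :=
  onCoord x (Fmat n)

/-- O^x_{YD_x} = F_{D_x}·CNOT_{YD_x}·F_{D_x} on ℂ^{Y×D̄}. -/
def OxD (n : ℕ) {X : Type*} [Fintype X] [DecidableEq X] (x : X) :
    Matrix (Yb n × Db n X) (Yb n × Db n X) ℂ :=
  ((1 : Matrix (Yb n) (Yb n) ℂ) ⊗ₖ FDx n x) * CNOTD x *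
    ((1 : Matrix (Yb n) (Yb n) ℂ) ⊗ₖ FDx n x)

/-- O_{XYD} = ∑_x |x⟩⟨x| ⊗ O^x_{YD_x} on ℂ^{X×Y×D̄}. -/
def OXYD (n : ℕ) (X : Type*) [Fintype X] [DecidableEq X] :
    Matrix (X × Yb n × Db n X) (X × Yb n × Db n X) ℂ :=
  Matrix.of fun p q =>
    if p.1 = q.1 then OxD n p.1 (p.2.1, p.2.2) (q.2.1, q.2.2) else 0

/-- The pointer set P = ZMod (|X|+1). -/
abbrev Ptr (X : Type*) [Fintype X] := ZMod (Fintype.card X + 1)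

/-- Encoding of X into the nonzero elements of ZMod (|X|+1). -/
def encodeX {X : Type*} [Fintype X] (x : X) : Ptr X :=
  (((Fintype.equivFin X x : ℕ) + 1 : ℕ) : Ptr X)

/-- ext(d): the smallest x ∈ X with (x, d x) ∈ R, encoded in ZMod (|X|+1); ∅ ↦ 0. -/
def extD {n : ℕ} {X : Type*} [Fintype X] [LinearOrder X] (R : X → Yb n → Prop)
    [∀ x, DecidablePred (R x)] (d : Db n X) : Ptr X :=
  if h : (Finset.univ.filter fun x => hitB R x (d x) = true).Nonempty then
    encodeX ((Finset.univ.filter fun x => hitB R x (d x) = true).min' h)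
  else 0

/-- The purified measurement M_{DP} : |d⟩⊗|w⟩ ↦ |d⟩⊗|w + ext(d)⟩ on ℂ^{D̄×P}. -/
def MDP {n : ℕ} {X : Type*} [Fintype X] [LinearOrder X] (R : X → Yb n → Prop)
    [∀ x, DecidablePred (R x)] :
    Matrix (Db n X × Ptr X) (Db n X × Ptr X) ℂ :=
  Matrix.of fun p q => if p = (q.1, q.2 + extD R q.1) then 1 else 0

/-- O^x_{YD_x} ⊗ 1_P on ℂ^{Y×D̄×P}. -/
def OxDP (n : ℕ) {X : Type*} [Fintype X] [DecidableEq X] (x : X) :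
    Matrix (Yb n × Db n X × Ptr X) (Yb n × Db n X × Ptr X) ℂ :=
  Matrix.of fun p q =>
    if p.2.2 = q.2.2 then OxD n x (p.1, p.2.1) (q.1, q.2.1) else 0

/-- 1_Y ⊗ M_{DP} on ℂ^{Y×D̄×P}. -/
def MYDP {n : ℕ} {X : Type*} [Fintype X] [LinearOrder X] (R : X → Yb n → Prop)
    [∀ x, DecidablePred (R x)] :
    Matrix (Yb n × Db n X × Ptr X) (Yb n × Db n X × Ptr X) ℂ :=
  Matrix.of fun p q =>
    if p.1 = q.1 then MDP R (p.2.1, p.2.2) (q.2.1, q.2.2) else 0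

/-- O_{XYD} ⊗ 1_P on ℂ^{X×Y×D̄×P}. -/
def OXYDP (n : ℕ) (X : Type*) [Fintype X] [DecidableEq X] :
    Matrix (X × Yb n × Db n X × Ptr X) (X × Yb n × Db n X × Ptr X) ℂ :=
  Matrix.of fun p q =>
    if p.2.2.2 = q.2.2.2 then
      OXYD n X (p.1, p.2.1, p.2.2.1) (q.1, q.2.1, q.2.2.1)
    else 0

/-- 1_{X×Y} ⊗ M_{DP} on ℂ^{X×Y×D̄×P}. -/
def MXYDP {n : ℕ} {X : Type*} [Fintype X] [LinearOrder X] (R : X → Yb n → Prop)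
    [∀ x, DecidablePred (R x)] :
    Matrix (X × Yb n × Db n X × Ptr X) (X × Yb n × Db n X × Ptr X) ℂ :=
  Matrix.of fun p q =>
    if p.1 = q.1 ∧ p.2.1 = q.2.1 then
      MDP R (p.2.2.1, p.2.2.2) (q.2.2.1, q.2.2.2)
    else 0








-- helper instance (Lean struggles to find this by search)
instance instDEq4 (n : ℕ) (X : Type*) [Fintype X] [DecidableEq X] :
    DecidableEq (X × Yb n × Db n X × Ptr X) :=
  instDecidableEqProd


-- extensions to the five-register space W × X × Y × D̄ × P
/-- 1_W ⊗ O_{XYD} ⊗ 1_P on ℂ^{W×X×Y×D̄×P}. -/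
def OW (n : ℕ) (W X : Type*) [Fintype X] [DecidableEq X] [DecidableEq W] :
    Matrix (W × X × Yb n × Db n X × Ptr X) (W × X × Yb n × Db n X × Ptr X) ℂ :=
  Matrix.of fun p q =>
    if p.1 = q.1 ∧ p.2.2.2.2 = q.2.2.2.2 then
      OXYD n X (p.2.1, p.2.2.1, p.2.2.2.1) (q.2.1, q.2.2.1, q.2.2.2.1)
    else 0

/-- 1_{W×X×Y} ⊗ M_{DP} on ℂ^{W×X×Y×D̄×P}. -/
def MW {n : ℕ} (W : Type*) {X : Type*} [Fintype X] [LinearOrder X] [DecidableEq W]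
    (R : X → Yb n → Prop) [∀ x, DecidablePred (R x)] :
    Matrix (W × X × Yb n × Db n X × Ptr X) (W × X × Yb n × Db n X × Ptr X) ℂ :=
  Matrix.of fun p q =>
    if p.1 = q.1 ∧ p.2.1 = q.2.1 ∧ p.2.2.1 = q.2.2.1 then
      MDP R (p.2.2.2.1, p.2.2.2.2) (q.2.2.2.1, q.2.2.2.2)
    else 0

instance instDEq5 (n : ℕ) (W X : Type*) [Fintype X] [DecidableEq X] [DecidableEq W] :
    DecidableEq (W × X × Yb n × Db n X × Ptr X) :=
  instDecidableEqProd


/-- V ⊗ 1_{D̄×P} on ℂ^{W×X×Y×D̄×P}. -/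
def Vext (n : ℕ) (W X : Type*) [Fintype X] [DecidableEq X]
    (V : Matrix (W × X × Yb n) (W × X × Yb n) ℂ) :
    Matrix (W × X × Yb n × Db n X × Ptr X) (W × X × Yb n × Db n X × Ptr X) ℂ :=
  Matrix.of fun p q =>
    if p.2.2.2 = q.2.2.2 then V (p.1, p.2.1, p.2.2.1) (q.1, q.2.1, q.2.2.1) else 0

/-- Ψ = ψ ⊗ |⊥⃗⟩ ⊗ |0⟩. -/
def PsiInit (n : ℕ) {W X : Type*} [Fintype X] [DecidableEq X]
    (ψ : W × X × Yb n → ℂ) : W × X × Yb n × Db n X × Ptr X → ℂ :=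
  fun p =>
    if p.2.2.2.1 = (fun _ => (none : Ybar n)) ∧ p.2.2.2.2 = (0 : Ptr X) then
      ψ (p.1, p.2.1, p.2.2.1)
    else 0

/-- 1_{W×X×Y×D̄} ⊗ |0⟩⟨0|_P. -/
def ProjZeroP (n : ℕ) (W X : Type*) [Fintype X] [DecidableEq X] [DecidableEq W] :
    Matrix (W × X × Yb n × Db n X × Ptr X) (W × X × Yb n × Db n X × Ptr X) ℂ :=
  Matrix.of fun p q =>
    if p.1 = q.1 ∧ p.2.1 = q.2.1 ∧ p.2.2.1 = q.2.2.1 ∧ p.2.2.2.1 = q.2.2.2.1 ∧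
        p.2.2.2.2 = (0 : Ptr X) ∧ q.2.2.2.2 = (0 : Ptr X) then 1 else 0



/-- O_{XYD} acting on registers 1, 2 and 5 of ℂ^{X×Y×X'×Y'×D̄}. -/
def Oquery1 (n : ℕ) (X : Type*) [Fintype X] [DecidableEq X] :
    Matrix (X × Yb n × X × Yb n × Db n X) (X × Yb n × X × Yb n × Db n X) ℂ :=
  Matrix.of fun p q =>
    if p.2.2.1 = q.2.2.1 ∧ p.2.2.2.1 = q.2.2.2.1 then
      OXYD n X (p.1, p.2.1, p.2.2.2.2) (q.1, q.2.1, q.2.2.2.2)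
    else 0

/-- O_{X'Y'D} acting on registers 3, 4 and 5 of ℂ^{X×Y×X'×Y'×D̄}. -/
def Oquery2 (n : ℕ) (X : Type*) [Fintype X] [DecidableEq X] :
    Matrix (X × Yb n × X × Yb n × Db n X) (X × Yb n × X × Yb n × Db n X) ℂ :=
  Matrix.of fun p q =>
    if p.1 = q.1 ∧ p.2.1 = q.2.1 then
      OXYD n X (p.2.2.1, p.2.2.2.1, p.2.2.2.2) (q.2.2.1, q.2.2.2.1, q.2.2.2.2)
    else 0


/-- M^R_{DP} acting on registers D and P of ℂ^{D̄×P×P'}. -/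
def Mext1 {n : ℕ} {X : Type*} [Fintype X] [LinearOrder X]
    (R : X → Yb n → Prop) [∀ x, DecidablePred (R x)] :
    Matrix (Db n X × Ptr X × Ptr X) (Db n X × Ptr X × Ptr X) ℂ :=
  Matrix.of fun p q =>
    if p.2.2 = q.2.2 then MDP R (p.1, p.2.1) (q.1, q.2.1) else 0

/-- M^{R'}_{DP'} acting on registers D and P' of ℂ^{D̄×P×P'}. -/
def Mext2 {n : ℕ} {X : Type*} [Fintype X] [LinearOrder X]
    (R' : X → Yb n → Prop) [∀ x, DecidablePred (R' x)] :
    Matrix (Db n X × Ptr X × Ptr X) (Db n X × Ptr X × Ptr X) ℂ :=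
  Matrix.of fun p q =>
    if p.2.1 = q.2.1 then MDP R' (p.1, p.2.2) (q.1, q.2.2) else 0




/-!
Since `ψ' - ψ'' = [Ō, M̄] ψ` and `ψ'ψ'† - ψ''ψ''† = ψ'(ψ' - ψ'')† + (ψ' - ψ'')ψ''†`, the trace
distance of the two pure states is at most `‖ψ' - ψ''‖ ≤ ‖[Ō, M̄]‖`, and it remains to bound the
operator norm of the commutator.

Let `Π` project onto the basis states whose database hits `R` at the queried `x`, and let `N_b`
shift the pointer by the value that `ext` takes when the entry at `x` is declared a hit (`b = 1`)
or not (`b = 0`). Then `M̄ = N₁ Π + N₀ (1 - Π)`. The shift `N_b` reads the database only away from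
the queried `x`, which the query leaves alone, so `N_b` commutes with `Ō` and
`[Ō, M̄] = (N₁ - N₀) [Ō, Π]`. Up to a reordering of the registers, `[Ō, Π]` is block diagonal with
blocks `[O, 1 ⊗ Π^x]` on `ℂ^{Y×Ȳ}`, where `O = (1 ⊗ F) CNOT (1 ⊗ F)`. As CNOT commutes with
`1 ⊗ Π^x`, such a block has norm at most `2 ‖[F, Π^x]‖`. Finally `F = 1 - χχ†` with
`χ = |⊥⟩ - |φ₀⟩`, so `[F, Π^x] = (Π^x χ) χ† - χ (Π^x χ)†` has norm at most
`2 ‖Π^x χ‖ ‖χ‖ ≤ 2 · √Γ_R 2^{-n/2} · √2`. Altogether `‖[Ō, M̄]‖ ≤ 2 · 2 · 2 √(2 Γ_R) 2^{-n/2}`.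
-/

open Matrix
open scoped Matrix.Norms.L2Operator InnerProductSpace

section Norms

variable {I J : Type*} [Fintype I] [Fintype J]

lemma vnorm_eq_norm (v : I → ℂ) : vnorm v = ‖WithLp.toLp 2 v‖ := by
  simp [vnorm, EuclideanSpace.norm_eq]

lemma vnorm_sq (v : I → ℂ) : vnorm v ^ 2 = ∑ i, ‖v i‖ ^ 2 :=
  Real.sq_sqrt (Finset.sum_nonneg fun _ _ => sq_nonneg _)

lemma vnorm_comp_equiv (v : J → ℂ) (e : I ≃ J) : vnorm (v ∘ e) = vnorm v := by
  simp only [vnorm, Function.comp_apply, e.sum_comp (fun j => ‖v j‖ ^ 2)]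

variable [DecidableEq I]

lemma vnorm_mulVec_le (A : Matrix I I ℂ) (v : I → ℂ) : vnorm (A *ᵥ v) ≤ ‖A‖ * vnorm v := by
  simpa [vnorm_eq_norm] using A.l2_opNorm_mulVec (WithLp.toLp 2 v)

lemma Matrix.l2_opNorm_le_of_vnorm_mulVec_le {A : Matrix I I ℂ} {C : ℝ} (hC : 0 ≤ C)
    (hA : ∀ v, vnorm (A *ᵥ v) ≤ C * vnorm v) : ‖A‖ ≤ C := by
  rw [← l2_opNorm_toEuclideanCLM]
  refine ContinuousLinearMap.opNorm_le_bound _ hC fun x => ?_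
  have h := hA (WithLp.ofLp x)
  rwa [vnorm_eq_norm, vnorm_eq_norm, ← toEuclideanCLM_toLp, WithLp.toLp_ofLp] at h

lemma Matrix.l2_opNorm_le_one_of_mem_unitaryGroup {A : Matrix I I ℂ}
    (hA : A ∈ unitaryGroup I ℂ) : ‖A‖ ≤ 1 := by
  cases isEmpty_or_nonempty I
  · simp [Subsingleton.elim A 0]
  · exact (CStarRing.norm_of_mem_unitary hA).le

lemma vnorm_mulVec_of_mem_unitaryGroup {A : Matrix I I ℂ} (hA : A ∈ unitaryGroup I ℂ)
    (v : I → ℂ) : vnorm (A *ᵥ v) = vnorm v := by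
  have hA' : star A ∈ unitaryGroup I ℂ := Unitary.star_mem hA
  refine le_antisymm ((vnorm_mulVec_le A v).trans ?_) ?_
  · exact mul_le_of_le_one_left (Real.sqrt_nonneg _) (l2_opNorm_le_one_of_mem_unitaryGroup hA)
  · calc vnorm v = vnorm (star A *ᵥ (A *ᵥ v)) := by
          rw [mulVec_mulVec, Unitary.star_mul_self_of_mem hA, one_mulVec]
      _ ≤ vnorm (A *ᵥ v) := (vnorm_mulVec_le _ _).trans
          (mul_le_of_le_one_left (Real.sqrt_nonneg _) (l2_opNorm_le_one_of_mem_unitaryGroup hA'))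

lemma Matrix.l2_opNorm_vecMulVec_le (a b : I → ℂ) :
    ‖vecMulVec a (star b)‖ ≤ vnorm a * vnorm b := by
  rw [← l2_opNorm_toEuclideanCLM]
  refine ContinuousLinearMap.opNorm_le_bound _ (by simp only [vnorm]; positivity) fun x => ?_
  have hx : (toEuclideanCLM (n := I) (𝕜 := ℂ) (vecMulVec a (star b))) x
      = ⟪WithLp.toLp 2 b, x⟫_ℂ • WithLp.toLp 2 a := by
    ext i
    simp [vecMulVec_mulVec, EuclideanSpace.inner_eq_star_dotProduct, dotProduct_comm, mul_comm]
  rw [hx, norm_smul, vnorm_eq_norm, vnorm_eq_norm]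
  calc ‖⟪WithLp.toLp 2 b, x⟫_ℂ‖ * ‖WithLp.toLp 2 a‖
      ≤ ‖WithLp.toLp 2 b‖ * ‖x‖ * ‖WithLp.toLp 2 a‖ := by gcongr; exact norm_inner_le_norm _ _
    _ = _ := by ring

lemma Matrix.blockDiagonal_mulVec_apply {K : Type*} [Fintype K] [DecidableEq K]
    (A : K → Matrix J J ℂ) (v : J × K → ℂ) (j : J) (k : K) :
    (blockDiagonal A *ᵥ v) (j, k) = (A k *ᵥ fun j' => v (j', k)) j := by
  simp only [mulVec, dotProduct, Fintype.sum_prod_type, blockDiagonal_apply]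
  rw [Finset.sum_comm, Finset.sum_eq_single k (fun k' _ hk' => by simp [Ne.symm hk']) (by simp)]
  simp

variable [DecidableEq J]

lemma Matrix.l2_opNorm_submatrix_equiv_le (A : Matrix J J ℂ) (e : I ≃ J) :
    ‖A.submatrix e e‖ ≤ ‖A‖ := by
  refine l2_opNorm_le_of_vnorm_mulVec_le (norm_nonneg _) fun v => ?_
  rw [submatrix_mulVec_equiv, vnorm_comp_equiv, ← vnorm_comp_equiv v e.symm]
  exact vnorm_mulVec_le _ _

lemma Matrix.l2_opNorm_blockDiagonal_le {K : Type*} [Fintype K] [DecidableEq K]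
    (A : K → Matrix J J ℂ) {C : ℝ} (hC : 0 ≤ C) (hA : ∀ k, ‖A k‖ ≤ C) :
    ‖blockDiagonal A‖ ≤ C := by
  refine l2_opNorm_le_of_vnorm_mulVec_le hC fun v => ?_
  have hblock : ∀ k, vnorm (A k *ᵥ fun j => v (j, k)) ^ 2
      ≤ C ^ 2 * vnorm (fun j => v (j, k)) ^ 2 := fun k => by
    rw [← mul_pow]
    exact pow_le_pow_left₀ (Real.sqrt_nonneg _) ((vnorm_mulVec_le _ _).trans
      (mul_le_mul_of_nonneg_right (hA k) (Real.sqrt_nonneg _))) 2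
  refine (pow_le_pow_iff_left₀ (Real.sqrt_nonneg _) (mul_nonneg hC (Real.sqrt_nonneg _))
    two_ne_zero).mp ?_
  calc vnorm (blockDiagonal A *ᵥ v) ^ 2
      = ∑ k, vnorm (A k *ᵥ fun j => v (j, k)) ^ 2 := by
        simp only [vnorm_sq, Fintype.sum_prod_type, blockDiagonal_mulVec_apply]
        exact Finset.sum_comm
    _ ≤ ∑ k, C ^ 2 * vnorm (fun j => v (j, k)) ^ 2 := Finset.sum_le_sum fun k _ => hblock k
    _ = (C * vnorm v) ^ 2 := by
        simp only [mul_pow, ← Finset.mul_sum, vnorm_sq, Fintype.sum_prod_type]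
        rw [Finset.sum_comm]

end Norms

section TraceDistance

lemma OrthonormalBasis.sum_norm_inner_mul_norm_inner_le {ι E : Type*} [Fintype ι]
    [NormedAddCommGroup E] [InnerProductSpace ℂ E] (B : OrthonormalBasis ι ℂ E) (x y : E) :
    ∑ i, ‖⟪B i, x⟫_ℂ‖ * ‖⟪B i, y⟫_ℂ‖ ≤ ‖x‖ * ‖y‖ := by
  refine (Real.sum_mul_le_sqrt_mul_sqrt _ _ _).trans_eq ?_
  rw [B.sum_sq_norm_inner_right, B.sum_sq_norm_inner_right, Real.sqrt_sq (norm_nonneg _),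
    Real.sqrt_sq (norm_nonneg _)]

variable {I : Type*} [Fintype I] [DecidableEq I]

lemma Matrix.IsHermitian.sum_abs_eigenvalues_le {Δ : Matrix I I ℂ} (hΔ : Δ.IsHermitian)
    {a b w : I → ℂ} (h : Δ = vecMulVec a (star w) + vecMulVec w (star b)) :
    ∑ i, |hΔ.eigenvalues i| ≤ vnorm w * (vnorm a + vnorm b) := by
  set B := hΔ.eigenvectorBasis
  have hcoef : ∀ (i : I) (v : I → ℂ), ‖star ⇑(B i) ⬝ᵥ v‖ = ‖⟪B i, WithLp.toLp 2 v⟫_ℂ‖ := by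
    intro i v
    rw [EuclideanSpace.inner_eq_star_dotProduct, dotProduct_comm]
  have hcoef' : ∀ (i : I) (v : I → ℂ), ‖star v ⬝ᵥ ⇑(B i)‖ = ‖⟪B i, WithLp.toLp 2 v⟫_ℂ‖ := by
    intro i v
    rw [star_dotProduct, norm_star, hcoef]
  have heig : ∀ i, |hΔ.eigenvalues i| ≤
      ‖⟪B i, WithLp.toLp 2 a⟫_ℂ‖ * ‖⟪B i, WithLp.toLp 2 w⟫_ℂ‖
        + ‖⟪B i, WithLp.toLp 2 w⟫_ℂ‖ * ‖⟪B i, WithLp.toLp 2 b⟫_ℂ‖ := by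
    intro i
    have hquad : star ⇑(B i) ⬝ᵥ Δ *ᵥ ⇑(B i)
        = (star ⇑(B i) ⬝ᵥ a) * (star w ⬝ᵥ ⇑(B i)) + (star ⇑(B i) ⬝ᵥ w) * (star b ⬝ᵥ ⇑(B i)) := by
      simp only [h, add_mulVec, vecMulVec_mulVec, op_smul_eq_smul, dotProduct_add,
        dotProduct_smul, smul_eq_mul]
      ring
    calc |hΔ.eigenvalues i| ≤ ‖star ⇑(B i) ⬝ᵥ Δ *ᵥ ⇑(B i)‖ := by
          rw [hΔ.eigenvalues_eq]; exact RCLike.abs_re_le_norm _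
      _ ≤ _ := by
          rw [hquad]
          refine (norm_add_le _ _).trans_eq ?_
          rw [norm_mul, norm_mul, hcoef, hcoef, hcoef', hcoef']
  calc ∑ i, |hΔ.eigenvalues i|
      ≤ ∑ i, ‖⟪B i, WithLp.toLp 2 a⟫_ℂ‖ * ‖⟪B i, WithLp.toLp 2 w⟫_ℂ‖
        + ∑ i, ‖⟪B i, WithLp.toLp 2 w⟫_ℂ‖ * ‖⟪B i, WithLp.toLp 2 b⟫_ℂ‖ := by
        rw [← Finset.sum_add_distrib]; exact Finset.sum_le_sum fun i _ => heig i
    _ ≤ vnorm a * vnorm w + vnorm w * vnorm b := by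
        simp only [vnorm_eq_norm]
        exact add_le_add (B.sum_norm_inner_mul_norm_inner_le _ _)
          (B.sum_norm_inner_mul_norm_inner_le _ _)
    _ = vnorm w * (vnorm a + vnorm b) := by ring

lemma half_sum_abs_eigenvalues_le_vnorm_sub {u v : I → ℂ} (hu : vnorm u = 1) (hv : vnorm v = 1)
    (hΔ : (vecMulVec u (star u) - vecMulVec v (star v)).IsHermitian) :
    1 / 2 * ∑ i, |hΔ.eigenvalues i| ≤ vnorm (u - v) := by
  have hsplit : vecMulVec u (star u) - vecMulVec v (star v)
      = vecMulVec u (star (u - v)) + vecMulVec (u - v) (star v) := by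
    ext i j
    simp only [vecMulVec_apply, Matrix.sub_apply, Matrix.add_apply, Pi.sub_apply, Pi.star_apply,
      star_sub]
    ring
  have h := hΔ.sum_abs_eigenvalues_le hsplit
  rw [hu, hv] at h
  linarith

end TraceDistance

section BlockLift

variable {α I J K : Type*} [DecidableEq K]

def blockLift [Zero α] (e : I ≃ J × K) (A : K → Matrix J J α) : Matrix I I α :=
  (blockDiagonal A).submatrix e e

variable (e : I ≃ J × K)

lemma blockLift_apply [Zero α] (A : K → Matrix J J α) (p q : I) :
    blockLift e A p q = if (e p).2 = (e q).2 then A (e p).2 (e p).1 (e q).1 else 0 := by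
  simp [blockLift, blockDiagonal_apply]

lemma blockLift_sub [AddGroup α] (A B : K → Matrix J J α) :
    blockLift e A - blockLift e B = blockLift e (A - B) := by
  rw [blockLift, blockLift, blockLift, blockDiagonal_sub]; rfl

lemma Matrix.one_kronecker_eq_blockLift [DecidableEq J] [MulZeroOneClass α] (A : Matrix J J α) :
    (1 : Matrix K K α) ⊗ₖ A = blockLift (Equiv.prodComm K J) (fun _ => A) := by
  ext ⟨k, j⟩ ⟨k', j'⟩
  by_cases h : k = k' <;> simp [blockLift_apply, h]

variable [Fintype I] [Fintype J] [Fintype K]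

lemma blockLift_mul [NonUnitalNonAssocSemiring α] (A B : K → Matrix J J α) :
    blockLift e A * blockLift e B = blockLift e (A * B) := by
  simp only [blockLift, submatrix_mul_equiv, ← blockDiagonal_mul, Pi.mul_def]

lemma blockLift_commutator [NonUnitalNonAssocRing α] (A B : K → Matrix J J α) :
    blockLift e A * blockLift e B - blockLift e B * blockLift e A
      = blockLift e (fun k => A k * B k - B k * A k) := by
  rw [blockLift_mul, blockLift_mul, blockLift_sub]; rfl

lemma blockLift_mem_unitaryGroup [DecidableEq I] [DecidableEq J] [CommRing α] [StarRing α]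
    {A : K → Matrix J J α} (hA : ∀ k, A k ∈ unitaryGroup J α) :
    blockLift e A ∈ unitaryGroup I α := by
  rw [mem_unitaryGroup_iff', star_eq_conjTranspose, blockLift, conjTranspose_submatrix,
    blockDiagonal_conjTranspose, submatrix_mul_equiv, ← blockDiagonal_mul]
  have hblocks : (fun k => (A k)ᴴ * A k) = 1 :=
    funext fun k => Unitary.star_mul_self_of_mem (hA k)
  simp [hblocks]

lemma l2_opNorm_blockLift_le [DecidableEq I] [DecidableEq J] (A : K → Matrix J J ℂ) {C : ℝ}
    (hC : 0 ≤ C) (hA : ∀ k, ‖A k‖ ≤ C) : ‖blockLift e A‖ ≤ C :=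
  (l2_opNorm_submatrix_equiv_le _ e).trans (l2_opNorm_blockDiagonal_le A hC hA)

lemma Matrix.one_kronecker_commutator [DecidableEq J] [Ring α] (A B : Matrix J J α) :
    (1 : Matrix K K α) ⊗ₖ A * (1 ⊗ₖ B) - 1 ⊗ₖ B * (1 ⊗ₖ A) = 1 ⊗ₖ (A * B - B * A) := by
  simp only [one_kronecker_eq_blockLift, blockLift_commutator]

lemma Matrix.l2_opNorm_one_kronecker_le [DecidableEq J] (A : Matrix J J ℂ) :
    ‖(1 : Matrix K K ℂ) ⊗ₖ A‖ ≤ ‖A‖ := by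
  rw [one_kronecker_eq_blockLift]
  exact l2_opNorm_blockLift_le _ _ (norm_nonneg _) fun _ => le_rfl

end BlockLift

section Permutations

variable {α I J K : Type*} (e : I ≃ J × K)

def blockPerm (g : Equiv.Perm K) : Equiv.Perm I :=
  (e.trans ((Equiv.refl J).prodCongr g)).trans e.symm

lemma blockPerm_inv (g : Equiv.Perm K) : blockPerm e g⁻¹ = (blockPerm e g)⁻¹ := by
  ext p
  simp [blockPerm, Equiv.Perm.inv_def]

variable [Fintype I] [DecidableEq I]

lemma Matrix.permMatrix_mem_unitaryGroup [CommRing α] [StarRing α] (σ : Equiv.Perm I) :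
    σ.permMatrix α ∈ unitaryGroup I α := by
  rw [mem_unitaryGroup_iff', star_eq_conjTranspose, conjTranspose_permMatrix, ← permMatrix_mul,
    mul_inv_cancel, permMatrix_one]

lemma Matrix.commute_permMatrix_diagonal [NonAssocSemiring α] (σ : Equiv.Perm I) {d : I → α}
    (hd : ∀ i, d (σ i) = d i) : Commute (σ.permMatrix α) (diagonal d) := by
  rw [Commute, SemiconjBy, Equiv.Perm.permMatrix, PEquiv.mul_toMatrix_toPEquiv,
    PEquiv.toMatrix_toPEquiv_mul]
  ext p q
  simp only [submatrix_apply, id, diagonal_apply, hd, Equiv.eq_symm_apply]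

lemma Matrix.permMatrix_inv_eq_of_piecewise [NonAssocRing α] {σ τ₁ τ₂ : Equiv.Perm I}
    (c : I → Prop) [DecidablePred c] (h₁ : ∀ q, c q → σ q = τ₁ q) (h₂ : ∀ q, ¬ c q → σ q = τ₂ q) :
    σ⁻¹.permMatrix α = τ₁⁻¹.permMatrix α * diagonal (fun q => if c q then 1 else 0)
      + τ₂⁻¹.permMatrix α * (1 - diagonal (fun q => if c q then 1 else 0)) := by
  rw [← diagonal_one, diagonal_sub]
  ext p q
  by_cases hq : c q <;>
    simp [mul_diagonal, PEquiv.toMatrix_apply, Equiv.Perm.inv_def, Equiv.symm_apply_eq, hq, h₁, h₂]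

lemma commute_blockLift_permMatrix [DecidableEq K] [NonAssocSemiring α] (A : K → Matrix J J α)
    {g : Equiv.Perm K} (hA : ∀ k, A (g k) = A k) :
    Commute (blockLift e A) ((blockPerm e g).permMatrix α) := by
  rw [Commute, SemiconjBy, Equiv.Perm.permMatrix, PEquiv.mul_toMatrix_toPEquiv,
    PEquiv.toMatrix_toPEquiv_mul]
  ext p q
  simp only [submatrix_apply, id, blockLift_apply, blockPerm, Equiv.trans_apply,
    Equiv.symm_trans_apply, Equiv.apply_symm_apply, Equiv.prodCongr_apply, Equiv.coe_refl,
    Prod.map, Equiv.symm_symm, Equiv.prodCongr_symm, Equiv.refl_symm, hA, Equiv.eq_symm_apply]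

end Permutations

lemma commutator_add_mul_one_sub {A : Type*} [Ring A] {O T F Q : A} (hT : Commute O T)
    (hF : Commute O F) :
    O * (T * Q + F * (1 - Q)) - (T * Q + F * (1 - Q)) * O = (T - F) * (O * Q - Q * O) := by
  have hT' : O * (T * Q) = T * (O * Q) := by rw [← mul_assoc, hT.eq, mul_assoc]
  have hF' : O * (F * (1 - Q)) = F * (O * (1 - Q)) := by rw [← mul_assoc, hF.eq, mul_assoc]
  rw [mul_add, hT', hF']
  noncomm_ring

lemma Matrix.l2_opNorm_commutator_conj_le {I : Type*} [Fintype I] [DecidableEq I]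
    {A C Q : Matrix I I ℂ} (hA : A ∈ unitaryGroup I ℂ) (hC : C ∈ unitaryGroup I ℂ)
    (hCQ : Commute C Q) : ‖A * C * A * Q - Q * (A * C * A)‖ ≤ 2 * ‖A * Q - Q * A‖ := by
  have hsplit : A * C * A * Q - Q * (A * C * A)
      = A * C * (A * Q - Q * A) + (A * Q - Q * A) * (C * A) := by
    simp only [mul_sub, sub_mul, ← mul_assoc]
    rw [mul_assoc A C Q, hCQ.eq, ← mul_assoc]
    abel
  have hAC : ‖A * C‖ ≤ 1 := l2_opNorm_le_one_of_mem_unitaryGroup (mul_mem hA hC)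
  have hCA : ‖C * A‖ ≤ 1 := l2_opNorm_le_one_of_mem_unitaryGroup (mul_mem hC hA)
  rw [hsplit]
  refine (norm_add_le _ _).trans ?_
  have h1 := l2_opNorm_mul (A * C) (A * Q - Q * A)
  have h2 := l2_opNorm_mul (A * Q - Q * A) (C * A)
  nlinarith [norm_nonneg (A * Q - Q * A)]

lemma Matrix.commutator_one_sub_vecMulVec {α I : Type*} [Fintype I] [DecidableEq I] [CommRing α]
    [StarRing α] {P : Matrix I I α} (hP : Pᴴ = P) (v : I → α) :
    (1 - vecMulVec v (star v)) * P - P * (1 - vecMulVec v (star v))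
      = vecMulVec (P *ᵥ v) (star v) - vecMulVec v (star (P *ᵥ v)) := by
  rw [star_mulVec, hP, sub_mul, mul_sub, one_mul, mul_one, mul_vecMulVec, vecMulVec_mul]
  abel

section Hadamard

variable {n : ℕ}

lemma signDot_comm (η y : Yb n) : signDot η y = signDot y η := by
  simp only [signDot, Bool.and_comm]

lemma signDot_zero_left (y : Yb n) : signDot (fun _ => false) y = 1 := by
  simp [signDot]

lemma sum_signDot_mul_signDot (y y' : Yb n) :
    ∑ a, signDot y a * signDot y' a = if y = y' then 2 ^ n else 0 := by
  have hprod : ∀ a : Yb n, signDot y a * signDot y' a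
      = ∏ i, ((if y i && a i then (-1 : ℂ) else 1) * (if y' i && a i then -1 else 1)) := by
    intro a
    simp only [signDot, Finset.prod_mul_distrib, Finset.prod_ite, Finset.prod_const, one_pow,
      mul_one]
  simp only [hprod]
  rw [← Fintype.prod_sum (fun i b => (if y i && b then (-1 : ℂ) else 1) *
    (if y' i && b then -1 else 1))]
  have hcoord : ∀ i, ∑ b : Bool, (if y i && b then (-1 : ℂ) else 1) * (if y' i && b then -1 else 1)
      = if y i = y' i then 2 else 0 := by
    intro i
    cases y i <;> cases y' i <;> norm_num
  simp only [hcoord]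
  split_ifs with h
  · simp [h]
  · obtain ⟨i, hi⟩ := Function.ne_iff.mp h
    exact Finset.prod_eq_zero (Finset.mem_univ i) (if_neg hi)

lemma cst_pos : 0 < cst n := by
  unfold cst; positivity

lemma cst_sq_mul_two_pow : cst n ^ 2 * 2 ^ n = 1 := by
  rw [cst, ← Real.rpow_natCast, ← Real.rpow_natCast 2 n, ← Real.rpow_mul (by norm_num),
    ← Real.rpow_add (by norm_num)]
  norm_num

lemma Hbar_conjTranspose : (Hbar n)ᴴ = Hbar n := by
  ext a b
  rcases a with _ | y <;> rcases b with _ | y' <;> simp [Hbar, signDot, and_comm]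

lemma Hbar_mul_Hbar : Hbar n * Hbar n = 1 := by
  ext a b
  rcases a with _ | y <;> rcases b with _ | y'
  case some.some =>
    have hsum : ∑ a, (cst n : ℂ) * signDot y a * ((cst n : ℂ) * signDot a y')
        = (cst n : ℂ) ^ 2 * ∑ a, signDot y a * signDot y' a := by
      rw [Finset.mul_sum]
      exact Finset.sum_congr rfl fun a _ => by rw [signDot_comm a]; ring
    have hc : (cst n : ℂ) ^ 2 * 2 ^ n = 1 := by exact_mod_cast cst_sq_mul_two_pow
    simp only [mul_apply, Fintype.sum_option, Hbar, of_apply, zero_mul, zero_add, hsum,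
      sum_signDot_mul_signDot, one_apply, Option.some.injEq]
    split_ifs <;> simp [hc]
  all_goals simp [mul_apply, Hbar]

lemma Hbar_mem_unitaryGroup : Hbar n ∈ unitaryGroup (Ybar n) ℂ := by
  rw [mem_unitaryGroup_iff', star_eq_conjTranspose, Hbar_conjTranspose, Hbar_mul_Hbar]

lemma swapBot_involutive : Function.Involutive (swapBot n) := by
  rintro (_ | y)
  · simp [swapBot]
  · by_cases hy : y = fun _ => false <;> simp [swapBot, hy]

lemma Sswap_eq_permMatrix : Sswap n = (swapBot_involutive (n := n)).toPerm.permMatrix ℂ := by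
  ext a b
  simp only [Sswap, of_apply, Equiv.Perm.permMatrix, PEquiv.toMatrix_apply,
    Equiv.toPEquiv_apply, Option.mem_def, Option.some.injEq, Function.Involutive.coe_toPerm]
  exact if_congr swapBot_involutive.eq_iff.symm rfl rfl

lemma Sswap_eq : Sswap n = 1 - vecMulVec (ket none - ket (some fun _ => false))
    (star (ket none - ket (some fun _ => false))) := by
  ext a b
  rcases a with _ | y <;> rcases b with _ | y'
  · simp [Sswap, swapBot, ket, vecMulVec_apply]
  · by_cases hy' : y' = fun _ => false <;> simp [Sswap, swapBot, ket, vecMulVec_apply, hy']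
  · by_cases hy : y = fun _ => false <;> simp [Sswap, swapBot, ket, vecMulVec_apply, hy, eq_comm]
  · by_cases hy : y = fun _ => false <;> by_cases hy' : y' = fun _ => false <;>
      simp [Sswap, swapBot, ket, vecMulVec_apply, one_apply, hy, hy', eq_comm]

end Hadamard

section Reflection

variable {n : ℕ}

def botSubPhi0 (n : ℕ) : Ybar n → ℂ := ket none - phi0 n

lemma Hbar_mulVec_ket_sub :
    Hbar n *ᵥ (ket none - ket (some fun _ => false)) = botSubPhi0 n := by
  ext a
  rcases a with _ | y <;> simp [Hbar, botSubPhi0, ket, phi0, phi, mulVec, dotProduct,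
    Fintype.sum_option, signDot]

-- `Sswap n = 1 - w w†` for `w = |⊥⟩ - |0ⁿ⟩`, and `H̄ w = |⊥⟩ - |φ₀⟩`.
lemma Fmat_eq : Fmat n = 1 - vecMulVec (botSubPhi0 n) (star (botSubPhi0 n)) := by
  rw [Fmat, Sswap_eq, mul_sub, sub_mul, mul_one, Hbar_mul_Hbar, mul_vecMulVec, vecMulVec_mul,
    Hbar_mulVec_ket_sub, ← Hbar_conjTranspose, ← star_mulVec, Hbar_mulVec_ket_sub]

lemma Fmat_mem_unitaryGroup : Fmat n ∈ unitaryGroup (Ybar n) ℂ := by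
  rw [Fmat, Sswap_eq_permMatrix]
  exact mul_mem (mul_mem Hbar_mem_unitaryGroup (permMatrix_mem_unitaryGroup _))
    Hbar_mem_unitaryGroup

end Reflection

section Commutator

variable {n : ℕ} {X : Type*} (R : X → Yb n → Prop) [∀ x, DecidablePred (R x)]

lemma botSubPhi0_none : botSubPhi0 n none = 1 := by
  simp [botSubPhi0, ket, phi0, phi]

lemma botSubPhi0_some (y : Yb n) : botSubPhi0 n (some y) = -(cst n : ℂ) := by
  simp [botSubPhi0, ket, phi0, phi, signDot_zero_left]

lemma norm_botSubPhi0_some (y : Yb n) : ‖botSubPhi0 n (some y)‖ = cst n := by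
  rw [botSubPhi0_some, norm_neg, Complex.norm_real, Real.norm_of_nonneg cst_pos.le]

lemma vnorm_botSubPhi0 : vnorm (botSubPhi0 n) = √2 := by
  rw [vnorm, Fintype.sum_option, botSubPhi0_none]
  simp only [norm_botSubPhi0_some, Finset.sum_const, Finset.card_univ, Fintype.card_fun,
    Fintype.card_bool, Fintype.card_fin, nsmul_eq_mul]
  norm_num [mul_comm, cst_sq_mul_two_pow]

lemma Pix_conjTranspose (x : X) : (Pix R x)ᴴ = Pix R x := by
  simp [Pix, diagonal_conjTranspose, apply_ite star]

lemma vnorm_Pix_mulVec_botSubPhi0_le [Fintype X] (x : X) :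
    vnorm (Pix R x *ᵥ botSubPhi0 n) ≤ √(GamR R) * cst n := by
  have hsum : ∑ a, ‖(Pix R x *ᵥ botSubPhi0 n) a‖ ^ 2 = Gam R x * cst n ^ 2 := by
    simp [Pix, mulVec_diagonal, Fintype.sum_option, hitB, apply_ite, norm_botSubPhi0_some,
      Finset.sum_ite, Gam]
  have hGam : (Gam R x : ℝ) ≤ GamR R := by
    exact_mod_cast Finset.le_sup (f := Gam R) (Finset.mem_univ x)
  rw [vnorm, hsum, Real.sqrt_mul (Nat.cast_nonneg _), Real.sqrt_sq cst_pos.le]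
  gcongr
  exact cst_pos.le

lemma l2_opNorm_commutator_Fmat_Pix_le [Fintype X] (x : X) :
    ‖Fmat n * Pix R x - Pix R x * Fmat n‖ ≤ 2 * (√(GamR R) * cst n * √2) := by
  rw [Fmat_eq, commutator_one_sub_vecMulVec (Pix_conjTranspose R x)]
  have hu := vnorm_Pix_mulVec_botSubPhi0_le R x
  refine (norm_sub_le _ _).trans ?_
  calc _ ≤ vnorm (Pix R x *ᵥ botSubPhi0 n) * vnorm (botSubPhi0 n)
        + vnorm (botSubPhi0 n) * vnorm (Pix R x *ᵥ botSubPhi0 n) :=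
        add_le_add (l2_opNorm_vecMulVec_le _ _) (l2_opNorm_vecMulVec_le _ _)
    _ ≤ _ := by rw [vnorm_botSubPhi0]; nlinarith [Real.sqrt_nonneg 2]

end Commutator


section SmallOracle

variable {n : ℕ}

lemma cnotFun_involutive : Function.Involutive (cnotFun n) := by
  rintro ⟨y, _ | y'⟩
  · rfl
  · simp only [cnotFun, Prod.mk.injEq, and_true]
    funext i
    simp [xorY]

lemma CNOTmat_eq_permMatrix : CNOTmat n = (cnotFun_involutive (n := n)).toPerm.permMatrix ℂ := by
  ext a b
  simp only [CNOTmat, of_apply, Equiv.Perm.permMatrix, PEquiv.toMatrix_apply,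
    Equiv.toPEquiv_apply, Option.mem_def, Option.some.injEq, Function.Involutive.coe_toPerm]
  exact if_congr cnotFun_involutive.eq_iff.symm rfl rfl

lemma Oxsmall_mem_unitaryGroup : Oxsmall n ∈ unitaryGroup (Yb n × Ybar n) ℂ := by
  have hF : (1 : Matrix (Yb n) (Yb n) ℂ) ⊗ₖ Fmat n ∈ unitaryGroup (Yb n × Ybar n) ℂ :=
    kronecker_mem_unitary (one_mem _) Fmat_mem_unitaryGroup
  rw [Oxsmall, CNOTmat_eq_permMatrix]
  exact mul_mem (mul_mem hF (permMatrix_mem_unitaryGroup _)) hF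

variable {X : Type*} [Fintype X] (R : X → Yb n → Prop) [∀ x, DecidablePred (R x)]

lemma l2_opNorm_commutator_Oxsmall_le (x : X) :
    ‖Oxsmall n * ((1 : Matrix (Yb n) (Yb n) ℂ) ⊗ₖ Pix R x) - (1 ⊗ₖ Pix R x) * Oxsmall n‖
      ≤ 2 * (2 * (√(GamR R) * cst n * √2)) := by
  have hF : (1 : Matrix (Yb n) (Yb n) ℂ) ⊗ₖ Fmat n ∈ unitaryGroup (Yb n × Ybar n) ℂ :=
    kronecker_mem_unitary (one_mem _) Fmat_mem_unitaryGroup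
  have hCQ : Commute (CNOTmat n) ((1 : Matrix (Yb n) (Yb n) ℂ) ⊗ₖ Pix R x) := by
    rw [CNOTmat_eq_permMatrix, Pix, ← diagonal_one, diagonal_kronecker_diagonal]
    refine commute_permMatrix_diagonal _ fun ⟨y, a⟩ => ?_
    rcases a with _ | y' <;> rfl
  refine (l2_opNorm_commutator_conj_le hF
    (CNOTmat_eq_permMatrix (n := n) ▸ permMatrix_mem_unitaryGroup _) hCQ).trans ?_
  rw [one_kronecker_commutator]
  gcongr
  exact (l2_opNorm_one_kronecker_le _).trans (l2_opNorm_commutator_Fmat_Pix_le R x)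

end SmallOracle

section Database

variable {n : ℕ} {X : Type*}

lemma restrict_eq_restrict_iff {x : X} {d d' : Db n X} :
    ((fun x' => d x'.1) : {x' // x' ≠ x} → Ybar n) = (fun x' => d' x'.1) ↔
      ∀ x', x' ≠ x → d x' = d' x' := by
  simp [funext_iff]

variable [DecidableEq X]

def splitAt (x : X) : Yb n × Db n X ≃ (Yb n × Ybar n) × ({x' // x' ≠ x} → Ybar n) :=
  ((Equiv.refl _).prodCongr (Equiv.funSplitAt x (Ybar n))).trans (Equiv.prodAssoc _ _ _).symm

lemma splitAt_apply (x : X) (y : Yb n) (d : Db n X) :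
    splitAt x (y, d) = ((y, d x), fun x' => d x'.1) := rfl

lemma splitAt_symm_apply (x : X) (y : Yb n) (d : Db n X) :
    (splitAt x).symm ((y, d x), fun x' => d x'.1) = (y, d) := by
  rw [← splitAt_apply, Equiv.symm_apply_apply]

variable [Fintype X]

lemma blockLift_splitAt_apply (x : X) (A : Matrix (Yb n × Ybar n) (Yb n × Ybar n) ℂ)
    (y y' : Yb n) (d d' : Db n X) :
    blockLift (splitAt x) (fun _ => A) (y, d) (y', d')
      = if ∀ x', x' ≠ x → d x' = d' x' then A (y, d x) (y', d' x) else 0 := by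
  simp only [blockLift_apply, splitAt_apply, restrict_eq_restrict_iff]

lemma one_kronecker_FDx (x : X) :
    (1 : Matrix (Yb n) (Yb n) ℂ) ⊗ₖ FDx n x = blockLift (splitAt x) (fun _ => 1 ⊗ₖ Fmat n) := by
  ext ⟨y, d⟩ ⟨y', d'⟩
  rw [blockLift_splitAt_apply]
  simp only [kroneckerMap_apply, FDx, onCoord, of_apply]
  split_ifs <;> simp

lemma CNOTD_eq_blockLift (x : X) : CNOTD (n := n) x = blockLift (splitAt x) (fun _ => CNOTmat n) := by
  ext ⟨y, d⟩ ⟨y', d'⟩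
  rw [blockLift_splitAt_apply]
  simp only [CNOTD, CNOTmat, of_apply]
  have hsplit : d = d' ↔ d x = d' x ∧ ∀ x', x' ≠ x → d x' = d' x' :=
    ⟨by rintro rfl; simp, fun ⟨hx, h⟩ => funext fun x' => by
      by_cases hx' : x' = x
      · subst hx'; exact hx
      · exact h x' hx'⟩
  rcases hd : d' x with _ | yx <;>
    simp only [cnotDFun, cnotFun, hd, Prod.mk.injEq, hsplit] <;> split_ifs <;> simp_all

lemma OxD_eq_blockLift (x : X) : OxD n x = blockLift (splitAt x) (fun _ => Oxsmall n) := by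
  rw [OxD, one_kronecker_FDx, CNOTD_eq_blockLift, blockLift_mul, blockLift_mul]
  rfl

end Database

section Registers

variable {n : ℕ} (W : Type*) {X : Type*} [Fintype X] [DecidableEq X]

/-- The query registers `(Y, D_x)`, and the other registers labelled by the queried `x`: in these
coordinates `Ō` is block diagonal and the pointer shifts of `M̄` only relabel blocks. -/
def queryEquiv :
    W × X × Yb n × Db n X × Ptr X ≃
      (Yb n × Ybar n) × Σ x : X, (W × Ptr X) × ({x' // x' ≠ x} → Ybar n) where
  toFun p := ((splitAt p.2.1 (p.2.2.1, p.2.2.2.1)).1,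
    ⟨p.2.1, (p.1, p.2.2.2.2), (splitAt p.2.1 (p.2.2.1, p.2.2.2.1)).2⟩)
  invFun q := (q.2.2.1.1, q.2.1, ((splitAt q.2.1).symm (q.1, q.2.2.2)).1,
    ((splitAt q.2.1).symm (q.1, q.2.2.2)).2, q.2.2.1.2)
  left_inv p := by simp
  right_inv q := by simp

variable [DecidableEq W]

lemma OW_eq_blockLift : OW n W X = blockLift (queryEquiv W) (fun _ => Oxsmall n) := by
  ext ⟨w, x, y, d, i⟩ ⟨w', x', y', d', i'⟩
  by_cases hx : x = x'
  · subst hx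
    simp [OW, OXYD, OxD_eq_blockLift, blockLift_apply, queryEquiv, ite_and]
  · simp [OW, OXYD, blockLift_apply, queryEquiv, hx]

variable (R : X → Yb n → Prop) [∀ x, DecidablePred (R x)]

def hitProj : Matrix (W × X × Yb n × Db n X × Ptr X) (W × X × Yb n × Db n X × Ptr X) ℂ :=
  diagonal fun p => if hitB R p.2.1 (p.2.2.2.1 p.2.1) then 1 else 0

lemma hitProj_eq_blockLift :
    hitProj W R = blockLift (queryEquiv W) (fun k => 1 ⊗ₖ Pix R k.1) := by
  simp only [hitProj, Pix, ← diagonal_one, diagonal_kronecker_diagonal, blockLift,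
    blockDiagonal_diagonal, submatrix_diagonal_equiv]
  congr 1
  funext ⟨w, x, y, d, i⟩
  simp [queryEquiv, splitAt_apply]

variable [Fintype W]

lemma l2_opNorm_commutator_OW_hitProj_le :
    ‖OW n W X * hitProj W R - hitProj W R * OW n W X‖ ≤ 2 * (2 * (√(GamR R) * cst n * √2)) := by
  rw [OW_eq_blockLift, hitProj_eq_blockLift, blockLift_commutator]
  have := cst_pos (n := n)
  exact l2_opNorm_blockLift_le _ _ (by positivity) fun k => l2_opNorm_commutator_Oxsmall_le R k.1

end Registers

section Measurement

variable {n : ℕ} (W : Type*) {X : Type*} [Fintype X] [LinearOrder X]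

def firstHit (h : X → Bool) : Ptr X :=
  if hne : (Finset.univ.filter fun x => h x = true).Nonempty then
    encodeX ((Finset.univ.filter fun x => h x = true).min' hne)
  else 0

variable (R : X → Yb n → Prop) [∀ x, DecidablePred (R x)]

lemma extD_eq_firstHit (d : Db n X) : extD R d = firstHit fun x => hitB R x (d x) := rfl

def measurePerm : Equiv.Perm (W × X × Yb n × Db n X × Ptr X) where
  toFun p := (p.1, p.2.1, p.2.2.1, p.2.2.2.1, p.2.2.2.2 + extD R p.2.2.2.1)
  invFun p := (p.1, p.2.1, p.2.2.1, p.2.2.2.1, p.2.2.2.2 - extD R p.2.2.2.1)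
  left_inv p := by simp
  right_inv p := by simp

variable [DecidableEq X]

/-- The value of `ext` if the hit bit at the queried `x` were `b`. It reads the block label of
`queryEquiv` only, which is what makes the pointer shift by it commute with `Ō`. -/
def extOfBlock (b : Bool) (k : Σ x : X, (W × Ptr X) × ({x' // x' ≠ x} → Ybar n)) : Ptr X :=
  firstHit fun x' => if h : x' = k.1 then b else hitB R x' (k.2.2 ⟨x', h⟩)

def pointerShift (b : Bool) : Equiv.Perm (Σ x : X, (W × Ptr X) × ({x' // x' ≠ x} → Ybar n)) where
  toFun k := ⟨k.1, (k.2.1.1, k.2.1.2 + extOfBlock W R b k), k.2.2⟩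
  invFun k := ⟨k.1, (k.2.1.1, k.2.1.2 - extOfBlock W R b k), k.2.2⟩
  left_inv k := by simp [extOfBlock]
  right_inv k := by simp [extOfBlock]

lemma blockPerm_pointerShift_apply (b : Bool) (w : W) (x : X) (y : Yb n) (d : Db n X)
    (i : Ptr X) :
    blockPerm (queryEquiv W) (pointerShift W R b) (w, x, y, d, i)
      = (w, x, y, d, i + firstHit (Function.update (fun x' => hitB R x' (d x')) x b)) := by
  have hpattern : (fun x' => if x' = x then b else hitB R x' (d x'))
      = Function.update (fun x' => hitB R x' (d x')) x b := by
    funext x'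
    by_cases h : x' = x <;> simp [h]
  simp [blockPerm, queryEquiv, pointerShift, extOfBlock, splitAt_apply, splitAt_symm_apply, hpattern]

lemma measurePerm_eq_blockPerm_pointerShift (q : W × X × Yb n × Db n X × Ptr X) :
    measurePerm W R q
      = blockPerm (queryEquiv W) (pointerShift W R (hitB R q.2.1 (q.2.2.2.1 q.2.1))) q := by
  obtain ⟨w, x, y, d, i⟩ := q
  rw [blockPerm_pointerShift_apply, Function.update_eq_self, ← extD_eq_firstHit]
  rfl

variable [DecidableEq W]

lemma MW_eq_permMatrix : MW W R = (measurePerm W R)⁻¹.permMatrix ℂ := by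
  ext ⟨w, x, y, d, i⟩ ⟨w', x', y', d', i'⟩
  by_cases hd : d = d'
  · subst hd
    simp [MW, MDP, measurePerm, PEquiv.toMatrix_apply, Equiv.Perm.inv_def, ite_and,
      sub_eq_iff_eq_add]
  · simp [MW, MDP, measurePerm, PEquiv.toMatrix_apply, Equiv.Perm.inv_def, ite_and, hd]

variable [Fintype W]

lemma MW_eq_pointerShift_hitProj : MW W R
    = (blockPerm (queryEquiv W) (pointerShift W R true))⁻¹.permMatrix ℂ * hitProj W R
      + (blockPerm (queryEquiv W) (pointerShift W R false))⁻¹.permMatrix ℂ * (1 - hitProj W R) := by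
  rw [MW_eq_permMatrix, hitProj]
  exact permMatrix_inv_eq_of_piecewise _
    (fun q hq => by rw [measurePerm_eq_blockPerm_pointerShift, hq])
    (fun q hq => by rw [measurePerm_eq_blockPerm_pointerShift, Bool.eq_false_iff.mpr hq])

lemma commute_OW_permMatrix_pointerShift (b : Bool) :
    Commute (OW n W X) ((blockPerm (queryEquiv W) (pointerShift W R b))⁻¹.permMatrix ℂ) := by
  rw [OW_eq_blockLift, ← blockPerm_inv]
  exact commute_blockLift_permMatrix _ _ fun _ => rfl

lemma l2_opNorm_commutator_OW_MW_le :
    ‖OW n W X * MW W R - MW W R * OW n W X‖ ≤ 8 * cst n * √(2 * GamR R) := by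
  set T := (blockPerm (queryEquiv W) (pointerShift W R true))⁻¹.permMatrix ℂ
  set F := (blockPerm (queryEquiv W) (pointerShift W R false))⁻¹.permMatrix ℂ
  have hT : ‖T‖ ≤ 1 := permMatrix_l2_opNorm_le _
  have hF : ‖F‖ ≤ 1 := permMatrix_l2_opNorm_le _
  rw [MW_eq_pointerShift_hitProj, commutator_add_mul_one_sub (commute_OW_permMatrix_pointerShift W R true)
    (commute_OW_permMatrix_pointerShift W R false)]
  calc ‖(T - F) * (OW n W X * hitProj W R - hitProj W R * OW n W X)‖
      ≤ ‖T - F‖ * ‖OW n W X * hitProj W R - hitProj W R * OW n W X‖ := l2_opNorm_mul _ _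
    _ ≤ 2 * (2 * (2 * (√(GamR R) * cst n * √2))) :=
        mul_le_mul ((norm_sub_le _ _).trans (by linarith))
          (l2_opNorm_commutator_OW_hitProj_le W R) (norm_nonneg _) zero_le_two
    _ = 8 * cst n * √(2 * GamR R) := by rw [Real.sqrt_mul zero_le_two]; ring

end Measurement

theorem stmt12_general (n : ℕ) {W X : Type*} [Fintype X] [LinearOrder X] [DecidableEq X]
    [Fintype W] [DecidableEq W]
    (R : X → Yb n → Prop) [∀ x, DecidablePred (R x)]
    (ψ : W × X × Yb n × Db n X × Ptr X → ℂ)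
    (hψ : ∑ i, ‖ψ i‖ ^ 2 = 1)
    (hΔ : (Matrix.vecMulVec ((OW n W X * MW W R).mulVec ψ)
              (star ((OW n W X * MW W R).mulVec ψ)) -
           Matrix.vecMulVec ((MW W R * OW n W X).mulVec ψ)
              (star ((MW W R * OW n W X).mulVec ψ))).IsHermitian) :
    (1 / 2) * ∑ i, |hΔ.eigenvalues i| ≤
      8 * (2 : ℝ) ^ (-(n : ℝ) / 2) * Real.sqrt (2 * (GamR R : ℝ)) := by
  have hψ1 : vnorm ψ = 1 := by rw [vnorm, hψ, Real.sqrt_one]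
  have hOW : OW n W X ∈ unitaryGroup _ ℂ := by
    rw [OW_eq_blockLift]; exact blockLift_mem_unitaryGroup _ fun _ => Oxsmall_mem_unitaryGroup
  have hMW : MW W R ∈ unitaryGroup _ ℂ := by
    rw [MW_eq_permMatrix]; exact permMatrix_mem_unitaryGroup _
  calc 1 / 2 * ∑ i, |hΔ.eigenvalues i|
      ≤ vnorm ((OW n W X * MW W R) *ᵥ ψ - (MW W R * OW n W X) *ᵥ ψ) :=
        half_sum_abs_eigenvalues_le_vnorm_sub
          (by rw [vnorm_mulVec_of_mem_unitaryGroup (mul_mem hOW hMW), hψ1])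
          (by rw [vnorm_mulVec_of_mem_unitaryGroup (mul_mem hMW hOW), hψ1]) hΔ
    _ ≤ ‖OW n W X * MW W R - MW W R * OW n W X‖ * vnorm ψ := by
        rw [← sub_mulVec]; exact vnorm_mulVec_le _ _
    _ ≤ 8 * cst n * √(2 * GamR R) := by
        rw [hψ1, mul_one]; exact l2_opNorm_commutator_OW_MW_le W R

theorem stmt12 (n : ℕ) {W X : Type*} [Fintype X] [LinearOrder X] [DecidableEq X] [Nonempty X]
    [Fintype W] [DecidableEq W] [Nonempty W]
    (R : X → Yb n → Prop) [∀ x, DecidablePred (R x)]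
    (ψ : W × X × Yb n × Db n X × Ptr X → ℂ)
    (hψ : ∑ i, ‖ψ i‖ ^ 2 = 1)
    (hΔ : (Matrix.vecMulVec ((OW n W X * MW W R).mulVec ψ)
              (star ((OW n W X * MW W R).mulVec ψ)) -
           Matrix.vecMulVec ((MW W R * OW n W X).mulVec ψ)
              (star ((MW W R * OW n W X).mulVec ψ))).IsHermitian) :
    (1 / 2) * ∑ i, |hΔ.eigenvalues i| ≤
      8 * (2 : ℝ) ^ (-(n : ℝ) / 2) * Real.sqrt (2 * (GamR R : ℝ)) :=
  stmt12_general n R ψ hψ hΔ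

end
end

section
/- (Parallel repetition of the trivial cheating probability.) Let C be a finite nonempty set and 𝔖 a family of subsets of C that is monotone increasing (S ∈ 𝔖 and S ⊆ S' imply S' ∈ 𝔖) and satisfies ∅ ∉ 𝔖. Define p_triv(𝔖) := (1/|C|)·max{|Ŝ| : Ŝ ⊆ C, Ŝ ∉ 𝔖}. For r ≥ 1 define 𝔖^{∨r} := {S ⊆ C^r : ∃ i ∈ {1,…,r}, S_i ∈ 𝔖}, where S_i := {c ∈ C : ∃ (c_1,…,c_r) ∈ S with c_i = c} is the i-th marginal of S. Then p_triv(𝔖^{∨r}) = (p_triv(𝔖))^r; equivalently, max{|S| : S ⊆ C^r, S ∉ 𝔖^{∨r}} = (max{|Ŝ| : Ŝ ⊆ C, Ŝ ∉ 𝔖})^r. -/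
/-- parallel repetition of the trivial cheating probability.
For a monotone increasing family 𝔖 of subsets of a finite challenge space C with
∅ ∉ 𝔖, and 𝔖^{∨r} := {S ⊆ C^r : ∃ i, S_i ∈ 𝔖} (S_i the i-th marginal),
the maximal size of a subset of C^r not in 𝔖^{∨r} is the r-th power of the maximal
size of a subset of C not in 𝔖; equivalently p_triv(𝔖^{∨r}) = (p_triv(𝔖))^r. -/
theorem stmt17 {C : Type*} [Fintype C] [DecidableEq C] [Nonempty C]
    (𝔖 : Finset (Finset C)) (h𝔖ne : 𝔖.Nonempty)
    (hmono : ∀ S S' : Finset C, S ∈ 𝔖 → S ⊆ S' → S' ∈ 𝔖)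
    (hempty : ∅ ∉ 𝔖) (r : ℕ) (hr : 1 ≤ r) :
    ((Finset.univ.filter fun S : Finset (Fin r → C) =>
          ¬ ∃ i : Fin r, S.image (fun f => f i) ∈ 𝔖).sup Finset.card)
        = ((Finset.univ.filter fun T : Finset C => T ∉ 𝔖).sup Finset.card) ^ r ∧
      ((((Finset.univ.filter fun S : Finset (Fin r → C) =>
          ¬ ∃ i : Fin r, S.image (fun f => f i) ∈ 𝔖).sup Finset.card : ℕ) : ℝ) /
            (Fintype.card C : ℝ) ^ r)
        = ((((Finset.univ.filter fun T : Finset C => T ∉ 𝔖).sup Finset.card : ℕ) : ℝ) /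
            (Fintype.card C : ℝ)) ^ r := by
  set m := ((Finset.univ.filter fun T : Finset C => T ∉ 𝔖).sup Finset.card) with hm
  have hmain : ((Finset.univ.filter fun S : Finset (Fin r → C) =>
          ¬ ∃ i : Fin r, S.image (fun f => f i) ∈ 𝔖).sup Finset.card) = m ^ r := by
    apply le_antisymm
    · apply Finset.sup_le
      intro S hS
      simp only [Finset.mem_filter, not_exists] at hS
      have hsub : S ⊆ Fintype.piFinset (fun i => S.image (fun f => f i)) := by
        intro f hf
        simp only [Fintype.mem_piFinset, Finset.mem_image]
        exact fun i => ⟨f, hf, rfl⟩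
      calc S.card ≤ (Fintype.piFinset (fun i => S.image (fun f => f i))).card :=
            Finset.card_le_card hsub
        _ = ∏ i : Fin r, (S.image (fun f => f i)).card := Fintype.card_piFinset _
        _ ≤ m ^ (Finset.univ : Finset (Fin r)).card := by
            apply Finset.prod_le_pow_card
            intro i _
            apply Finset.le_sup (f := Finset.card)
            simp [hS.2 i]
        _ = m ^ r := by simp
    · -- lower bound
      obtain ⟨T, hTmem, hTcard⟩ := Finset.exists_mem_eq_sup
        (Finset.univ.filter fun T : Finset C => T ∉ 𝔖) ⟨∅, by simp [hempty]⟩ Finset.card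
      simp only [Finset.mem_filter] at hTmem
      have hTnot : T ∉ 𝔖 := hTmem.2
      have hmem : (Fintype.piFinset (fun _ : Fin r => T)) ∈
          (Finset.univ.filter fun S : Finset (Fin r → C) =>
            ¬ ∃ i : Fin r, S.image (fun f => f i) ∈ 𝔖) := by
        simp only [Finset.mem_filter, Finset.mem_univ, true_and, not_exists]
        intro i hi
        apply hTnot
        apply hmono _ _ hi
        intro c hc
        simp only [Finset.mem_image, Fintype.mem_piFinset] at hc
        obtain ⟨f, hf, rfl⟩ := hc
        exact hf i
      have := Finset.le_sup (f := Finset.card) hmem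
      calc m ^ r = (Fintype.piFinset (fun _ : Fin r => T)).card := by
            simp [hm, hTcard]
        _ ≤ _ := this
  refine ⟨hmain, ?_⟩
  rw [hmain, div_pow]
  push_cast
  ring
end
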